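/- There is an algorithm that, given an integer k ≥ 2, a DFAO M generating a k-automatic sequence a = (a_n)_{n≥0}, and a length l ≥ 1, decides whether a satisfies the property that whenever x is a factor of a of length ≥ l, its reversal x^R is not a factor of a. -/

import Mathlib

/-- Run an encoded DFAO transition table from state `q` on a list of base-`k`
digits, least significant digit first (this is `w^R` for a most-significant-first
representation `w`). -/
def dfaoRun (trans : List (List ℕ)) : ℕ → List ℕ → ℕ
  | q, [] => q
  | q, d :: ds => dfaoRun trans ((trans.getD q []).getD d 0) ds

/-- The encoded DFAO `(trans, q0, out)` over input alphabet `Σ_k = {0,…,k-1}`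
generates the sequence `a`: for every `m` and every base-`k` representation `w`
of `m` (given least significant digit first, possibly with trailing zeros,
all digits `< k`), the output on `w` is `a m`. -/
def dfaoGenerates (k : ℕ) (trans : List (List ℕ)) (q0 : ℕ) (out : List ℕ)
    (a : ℕ → ℕ) : Prop :=
  ∀ (m : ℕ) (w : List ℕ), (∀ d ∈ w, d < k) → Nat.ofDigits k w = m →
    a m = out.getD (dfaoRun trans q0 w) 0

/-- The factor `a_i a_{i+1} ⋯ a_{i+L-1}` of the sequence `a`. -/
def factorAt (a : ℕ → ℕ) (i L : ℕ) : List ℕ :=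
  (List.range L).map fun j => a (i + j)

/-- `w` is a factor of the infinite word `a`. -/
def IsFactorOf (a : ℕ → ℕ) (w : List ℕ) : Prop :=
  ∃ i : ℕ, w = factorAt a i w.length

/-!
Write a position as `i = q * k ^ L + r` with `r < k ^ L`. Each letter `a (i + j)`, `j < L`, is the
output of a run that reads the `L` low digits of `r + j` and then the digits of `q`, or those of
`q + 1` when `r + j` carries. So the factor of length `L` at `i` depends only on `r` and on the
profile of `q`: for every state `s`, the states reached from `s` on `q` and on `q + 1`. The profile
of `d :: w` is determined by `d` and the profile of `w`, so a pigeonhole argument on the suffixes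
of the digit string of `q` removes digits until at most as many remain as there are profiles.
Hence every factor of length `L` occurs below an explicit bound. The property only has to be
checked on factors of length exactly `l` (a longer factor's prefix of length `l` and the matching
suffix of its reversal are factors), and these are now finitely many.
-/

def dfaoStep (trans : List (List ℕ)) (q d : ℕ) : ℕ := (trans.getD q []).getD d 0

theorem dfaoRun_eq_foldl (trans : List (List ℕ)) (q : ℕ) (w : List ℕ) :
    dfaoRun trans q w = w.foldl (dfaoStep trans) q := by
  induction w generalizing q with
  | nil => rfl
  | cons d w ih => exact ih _

theorem dfaoRun_append (trans : List (List ℕ)) (q : ℕ) (u v : List ℕ) :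
    dfaoRun trans q (u ++ v) = dfaoRun trans (dfaoRun trans q u) v := by
  simp only [dfaoRun_eq_foldl, List.foldl_append]

theorem dfaoStep_le_sum (trans : List (List ℕ)) (q d : ℕ) :
    dfaoStep trans q d ≤ trans.flatten.sum := by
  rw [dfaoStep, List.getD_eq_getElem?_getD]
  rcases hd : (trans.getD q [])[d]? with _ | x
  · exact Nat.zero_le _
  · refine List.le_sum_of_mem
      (List.mem_flatten.2 ⟨trans.getD q [], ?_, List.mem_of_getElem? hd⟩)
    rw [List.getD_eq_getElem?_getD] at hd ⊢
    rcases hq : trans[q]? with _ | r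
    · simp [hq] at hd
    · simpa using List.mem_of_getElem? hq

theorem dfaoRun_le {trans : List (List ℕ)} {q N : ℕ} (hq : q ≤ N)
    (hN : trans.flatten.sum ≤ N) (w : List ℕ) : dfaoRun trans q w ≤ N := by
  induction w generalizing q with
  | nil => exact hq
  | cons d w ih => exact ih ((dfaoStep_le_sum trans q d).trans hN)

def lowDigits (k n L : ℕ) : List ℕ := (List.range L).map fun j => n / k ^ j % k

@[simp] theorem length_lowDigits (k n L : ℕ) : (lowDigits k n L).length = L := by
  simp [lowDigits]

theorem lowDigits_lt {k : ℕ} (hk : 0 < k) (n L : ℕ) : ∀ d ∈ lowDigits k n L, d < k := by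
  simp only [lowDigits, List.mem_map]
  rintro d ⟨j, -, rfl⟩
  exact Nat.mod_lt _ hk

theorem ofDigits_lowDigits (k n L : ℕ) : Nat.ofDigits k (lowDigits k n L) = n % k ^ L := by
  induction L with
  | zero => simp [lowDigits, Nat.mod_one]
  | succ L ih =>
    rw [lowDigits, List.range_succ, List.map_append, Nat.ofDigits_append, ← lowDigits, ih,
      Nat.mod_pow_succ]
    simp

def succDigits (k : ℕ) : List ℕ → List ℕ
  | [] => [1]
  | d :: w => if d + 1 < k then (d + 1) :: w else 0 :: succDigits k w

theorem succDigits_lt {k : ℕ} (hk : 2 ≤ k) :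
    ∀ {w : List ℕ}, (∀ d ∈ w, d < k) → ∀ d ∈ succDigits k w, d < k
  | [], _ => by simpa [succDigits] using Nat.lt_of_succ_le hk
  | c :: w, hw => by
    rw [List.forall_mem_cons] at hw
    unfold succDigits
    split_ifs with hc
    · simpa [hc] using hw.2
    · simpa [show 0 < k by omega] using succDigits_lt hk hw.2

theorem ofDigits_succDigits {k : ℕ} :
    ∀ {w : List ℕ}, (∀ d ∈ w, d < k) →
      Nat.ofDigits k (succDigits k w) = Nat.ofDigits k w + 1
  | [], _ => by simp [succDigits]
  | c :: w, hw => by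
    rw [List.forall_mem_cons] at hw
    unfold succDigits
    split_ifs with hc
    · simp only [Nat.ofDigits_cons]; ring
    · have hck : c + 1 = k := by omega
      simp only [Nat.ofDigits_cons, ofDigits_succDigits hw.2]
      rw [← hck]; ring

section Pumping

variable {α σ : Type*} (P : List α → σ)
  (hP : ∀ a u v, P u = P v → P (a :: u) = P (a :: v))
include hP

theorem append_congr_of_cons_congr (x : List α) {u v : List α} (h : P u = P v) :
    P (x ++ u) = P (x ++ v) := by
  induction x with
  | nil => exact h
  | cons a x ih => exact hP a _ _ ih

theorem exists_shorter_sublist_of_card_lt {S : Finset σ} (hS : ∀ w, P w ∈ S) {w : List α}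
    (hw : S.card < w.length) : ∃ u, u.Sublist w ∧ u.length < w.length ∧ P u = P w := by
  obtain ⟨i, hi, j, hj, hij, heq⟩ := Finset.exists_ne_map_eq_of_card_lt_of_maps_to
    (s := Finset.range w.length) (f := fun i => P (w.drop i)) (by simpa using hw)
    (fun _ _ => hS _)
  rw [Finset.mem_range] at hi hj
  wlog hlt : i < j generalizing i j
  · exact this j hj i hi hij.symm heq.symm (by omega)
  refine ⟨w.take i ++ w.drop j, ?_, ?_, ?_⟩
  · simpa using
      (List.Sublist.refl (w.take i)).append (List.drop_sublist_drop_left w hlt.le)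
  · simp only [List.length_append, List.length_take, List.length_drop]; omega
  · conv_rhs => rw [← List.take_append_drop i w]
    exact append_congr_of_cons_congr P hP _ heq.symm

theorem exists_sublist_length_le_card {S : Finset σ} (hS : ∀ w, P w ∈ S) (w : List α) :
    ∃ u, u.Sublist w ∧ u.length ≤ S.card ∧ P u = P w := by
  induction h : w.length using Nat.strong_induction_on generalizing w with
  | _ n ih =>
    by_cases hw : w.length ≤ S.card
    · exact ⟨w, List.Sublist.refl w, hw, rfl⟩
    obtain ⟨v, hvw, hlt, hv⟩ := exists_shorter_sublist_of_card_lt P hP hS (not_le.1 hw)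
    obtain ⟨u, huv, hu, hPu⟩ := ih _ (h ▸ hlt) v rfl
    exact ⟨u, huv.trans hvw, hu, hPu.trans hv⟩

end Pumping

theorem factorAt_congr {a : ℕ → ℕ} {i i' L : ℕ} (h : ∀ j < L, a (i + j) = a (i' + j)) :
    factorAt a i L = factorAt a i' L :=
  List.map_congr_left fun j hj => h j (List.mem_range.1 hj)

@[simp] theorem length_factorAt (a : ℕ → ℕ) (i L : ℕ) : (factorAt a i L).length = L := by
  simp [factorAt]

theorem eq_factorAt_length_iff {a : ℕ → ℕ} {w : List ℕ} {i : ℕ} :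
    w = factorAt a i w.length ↔ ∀ j (hj : j < w.length), w[j] = a (i + j) := by
  simp [List.ext_getElem_iff, factorAt]

theorem IsFactorOf.take {a : ℕ → ℕ} {w : List ℕ} (h : IsFactorOf a w) (n : ℕ) :
    IsFactorOf a (w.take n) := by
  obtain ⟨i, hi⟩ := h
  refine ⟨i, eq_factorAt_length_iff.2 fun j hj => ?_⟩
  rw [List.getElem_take, eq_factorAt_length_iff.1 hi]

theorem IsFactorOf.drop {a : ℕ → ℕ} {w : List ℕ} (h : IsFactorOf a w) (n : ℕ) :
    IsFactorOf a (w.drop n) := by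
  obtain ⟨i, hi⟩ := h
  refine ⟨i + n, eq_factorAt_length_iff.2 fun j hj => ?_⟩
  rw [List.getElem_drop, eq_factorAt_length_iff.1 hi, add_assoc]

theorem forall_isFactorOf_le_length_iff (a : ℕ → ℕ) (l : ℕ) :
    (∀ w, IsFactorOf a w → l ≤ w.length → ¬ IsFactorOf a w.reverse) ↔
      ∀ w, IsFactorOf a w → w.length = l → ¬ IsFactorOf a w.reverse := by
  refine ⟨fun h w hw hl => h w hw hl.ge, fun h w hw hl hrev => ?_⟩
  refine h (w.take l) (hw.take l) (by simp [hl]) ?_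
  rw [List.reverse_take]
  exact hrev.drop _

def stateBound (trans : List (List ℕ)) (q0 : ℕ) : ℕ := q0 + trans.flatten.sum

def runProfile (k : ℕ) (trans : List (List ℕ)) (N : ℕ) (w : List ℕ) :
    Fin (N + 1) → ℕ × ℕ :=
  fun s => (dfaoRun trans s w, dfaoRun trans s (succDigits k w))

section RunProfile

variable {k : ℕ} {trans : List (List ℕ)} {N : ℕ}

theorem runProfile_eq_iff {u v : List ℕ} :
    runProfile k trans N u = runProfile k trans N v ↔ ∀ s ≤ N,
      dfaoRun trans s u = dfaoRun trans s v ∧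
        dfaoRun trans s (succDigits k u) = dfaoRun trans s (succDigits k v) := by
  simp only [runProfile, funext_iff, Prod.ext_iff, Fin.forall_iff, Nat.lt_succ_iff]

theorem runProfile_mem (hN : trans.flatten.sum ≤ N) (w : List ℕ) :
    runProfile k trans N w ∈
      Fintype.piFinset fun _ => Finset.range (N + 1) ×ˢ Finset.range (N + 1) := by
  simp only [Fintype.mem_piFinset, Finset.mem_product, Finset.mem_range, Nat.lt_succ_iff]
  exact fun s => ⟨dfaoRun_le s.is_le hN w, dfaoRun_le s.is_le hN _⟩

theorem runProfile_cons_congr (hN : trans.flatten.sum ≤ N) (d : ℕ) {u v : List ℕ}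
    (h : runProfile k trans N u = runProfile k trans N v) :
    runProfile k trans N (d :: u) = runProfile k trans N (d :: v) := by
  rw [runProfile_eq_iff] at h ⊢
  have hstep : ∀ s e, dfaoStep trans s e ≤ N := fun s e => (dfaoStep_le_sum trans s e).trans hN
  refine fun s _ => ⟨(h _ (hstep s d)).1, ?_⟩
  unfold succDigits
  split_ifs
  · exact (h _ (hstep s (d + 1))).1
  · exact (h _ (hstep s 0)).2

end RunProfile

section FactorBound

variable {k : ℕ} {trans : List (List ℕ)} {q0 : ℕ} {out : List ℕ} {a : ℕ → ℕ}

theorem apply_ofDigits_mul_pow_add (hk : 2 ≤ k) (hgen : dfaoGenerates k trans q0 out a)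
    {v : List ℕ} (hv : ∀ d ∈ v, d < k) {L t : ℕ} (ht : t < 2 * k ^ L) :
    a (Nat.ofDigits k v * k ^ L + t) =
      out.getD (dfaoRun trans (dfaoRun trans q0 (lowDigits k t L))
        (if t < k ^ L then v else succDigits k v)) 0 := by
  rw [← dfaoRun_append]
  apply hgen
  · simp only [List.mem_append]
    rintro d (hd | hd)
    · exact lowDigits_lt (by omega) t L d hd
    · split_ifs at hd
      exacts [hv d hd, succDigits_lt hk hv d hd]
  · rw [Nat.ofDigits_append, length_lowDigits, ofDigits_lowDigits]
    split_ifs with htL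
    · rw [Nat.mod_eq_of_lt htL]; ring
    · have htL' := not_lt.1 htL
      rw [ofDigits_succDigits hv, Nat.mod_eq_sub_mod htL', Nat.mod_eq_of_lt (by omega)]
      zify [htL']; ring

theorem factorAt_congr_of_runProfile_eq (hk : 2 ≤ k) (hgen : dfaoGenerates k trans q0 out a)
    {u v : List ℕ} (hu : ∀ d ∈ u, d < k) (hv : ∀ d ∈ v, d < k)
    (huv : runProfile k trans (stateBound trans q0) u =
      runProfile k trans (stateBound trans q0) v)
    {L r : ℕ} (hr : r < k ^ L) :
    factorAt a (Nat.ofDigits k u * k ^ L + r) L =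
      factorAt a (Nat.ofDigits k v * k ^ L + r) L := by
  refine factorAt_congr fun j hj => ?_
  have hrj : r + j < 2 * k ^ L := by
    have := Nat.lt_pow_self (n := L) (show 1 < k by omega)
    omega
  have hs : dfaoRun trans q0 (lowDigits k (r + j) L) ≤ stateBound trans q0 :=
    dfaoRun_le (Nat.le_add_right _ _) (Nat.le_add_left _ _) _
  obtain ⟨hrun, hrun_succ⟩ := runProfile_eq_iff.1 huv _ hs
  rw [add_assoc, add_assoc, apply_ofDigits_mul_pow_add hk hgen hu hrj,
    apply_ofDigits_mul_pow_add hk hgen hv hrj]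
  split_ifs
  exacts [by rw [hrun], by rw [hrun_succ]]

def factorBound (k : ℕ) (trans : List (List ℕ)) (q0 L : ℕ) : ℕ :=
  k ^ (((stateBound trans q0 + 1) * (stateBound trans q0 + 1)) ^ (stateBound trans q0 + 1) + L)

theorem exists_lt_factorBound_factorAt_eq (hk : 2 ≤ k) (hgen : dfaoGenerates k trans q0 out a)
    (i L : ℕ) : ∃ i' < factorBound k trans q0 L, factorAt a i' L = factorAt a i L := by
  set N := stateBound trans q0
  have hk1 : 1 < k := by omega
  have hdigits : ∀ d ∈ k.digits (i / k ^ L), d < k := fun _ => Nat.digits_lt_base hk1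
  obtain ⟨u, hu, hlen, hprofile⟩ := exists_sublist_length_le_card (runProfile k trans N)
    (runProfile_cons_congr (Nat.le_add_left _ _)) (runProfile_mem (Nat.le_add_left _ _))
    (k.digits (i / k ^ L))
  have hlen' : u.length ≤ ((N + 1) * (N + 1)) ^ (N + 1) := by simpa using hlen
  have hu_lt : Nat.ofDigits k u < k ^ (((N + 1) * (N + 1)) ^ (N + 1)) :=
    (Nat.ofDigits_lt_base_pow_length hk1 fun d hd => hdigits d (hu.subset hd)).trans_le
      (Nat.pow_le_pow_right (by omega) hlen')
  refine ⟨Nat.ofDigits k u * k ^ L + i % k ^ L, ?_, ?_⟩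
  · have hr : i % k ^ L < k ^ L := Nat.mod_lt _ (by positivity)
    calc Nat.ofDigits k u * k ^ L + i % k ^ L < (Nat.ofDigits k u + 1) * k ^ L := by
          rw [add_one_mul]; omega
      _ ≤ k ^ (((N + 1) * (N + 1)) ^ (N + 1)) * k ^ L := Nat.mul_le_mul_right _ hu_lt
      _ = factorBound k trans q0 L := (pow_add _ _ _).symm
  · rw [factorAt_congr_of_runProfile_eq hk hgen (fun d hd => hdigits d (hu.subset hd)) hdigits
      hprofile (Nat.mod_lt i (by positivity)), Nat.ofDigits_digits, mul_comm, Nat.div_add_mod]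

end FactorBound

-- `m < k ^ m`, so `m` digits represent `m`.
def seqOf (k : ℕ) (trans : List (List ℕ)) (q0 : ℕ) (out : List ℕ) (m : ℕ) : ℕ :=
  out.getD (dfaoRun trans q0 (lowDigits k m m)) 0

def MirrorCheck (k : ℕ) (trans : List (List ℕ)) (q0 : ℕ) (out : List ℕ) (l : ℕ) : Prop :=
  ∀ i < factorBound k trans q0 l, ∀ j < factorBound k trans q0 l,
    factorAt (seqOf k trans q0 out) j l ≠ (factorAt (seqOf k trans q0 out) i l).reverse

instance (k : ℕ) (trans : List (List ℕ)) (q0 : ℕ) (out : List ℕ) (l : ℕ) :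
    Decidable (MirrorCheck k trans q0 out l) := by
  unfold MirrorCheck; infer_instance

section Correctness

variable {k : ℕ} {trans : List (List ℕ)} {q0 : ℕ} {out : List ℕ} {a : ℕ → ℕ}

theorem seqOf_eq (hk : 2 ≤ k) (hgen : dfaoGenerates k trans q0 out a) :
    seqOf k trans q0 out = a :=
  funext fun m => (hgen m _ (lowDigits_lt (by omega) m m)
    (by rw [ofDigits_lowDigits, Nat.mod_eq_of_lt (Nat.lt_pow_self (by omega))])).symm

theorem isFactorOf_and_length_eq_iff (hk : 2 ≤ k) (hgen : dfaoGenerates k trans q0 out a)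
    {w : List ℕ} {L : ℕ} :
    IsFactorOf a w ∧ w.length = L ↔ ∃ i < factorBound k trans q0 L, w = factorAt a i L := by
  constructor
  · rintro ⟨⟨i, hi⟩, rfl⟩
    obtain ⟨i', hi', heq⟩ := exists_lt_factorBound_factorAt_eq hk hgen i w.length
    exact ⟨i', hi', hi.trans heq.symm⟩
  · rintro ⟨i, -, rfl⟩
    exact ⟨⟨i, by rw [length_factorAt]⟩, length_factorAt a i L⟩

theorem mirrorCheck_iff (hk : 2 ≤ k) (hgen : dfaoGenerates k trans q0 out a) (l : ℕ) :
    MirrorCheck k trans q0 out l ↔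
      ∀ w, IsFactorOf a w → l ≤ w.length → ¬ IsFactorOf a w.reverse := by
  rw [forall_isFactorOf_le_length_iff, MirrorCheck, seqOf_eq hk hgen]
  constructor
  · rintro h w hw hlen hrev
    obtain ⟨i, hi, rfl⟩ := (isFactorOf_and_length_eq_iff hk hgen).1 ⟨hw, hlen⟩
    obtain ⟨j, hj, hji⟩ :=
      (isFactorOf_and_length_eq_iff hk hgen).1 ⟨hrev, by rw [List.length_reverse, hlen]⟩
    exact h i hi j hj hji.symm
  · intro h i _ j _ hji
    refine h _ ⟨i, by rw [length_factorAt]⟩ (length_factorAt a i l) ⟨j, ?_⟩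
    rw [← hji, length_factorAt]

end Correctness

namespace Primrec

variable {α : Type*} [Primcodable α]

theorem nat_pow : Primrec₂ ((· ^ ·) : ℕ → ℕ → ℕ) :=
  Primrec₂.unpaired'.1 Nat.Primrec.pow

theorem dfaoRun {trans : α → List (List ℕ)} {q : α → ℕ} {w : α → List ℕ}
    (htrans : Primrec trans) (hq : Primrec q) (hw : Primrec w) :
    Primrec fun x => _root_.dfaoRun (trans x) (q x) (w x) := by
  have hstep : Primrec₂ fun x (p : ℕ × ℕ) => dfaoStep (trans x) p.1 p.2 :=
    (list_getD 0).comp ((list_getD []).comp (htrans.comp fst) (fst.comp snd)) (snd.comp snd)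
  exact (list_foldl hw hq hstep).of_eq fun x => (dfaoRun_eq_foldl _ _ _).symm

theorem lowDigits {k n L : α → ℕ} (hk : Primrec k) (hn : Primrec n) (hL : Primrec L) :
    Primrec fun x => _root_.lowDigits (k x) (n x) (L x) :=
  list_map (list_range.comp hL)
    (nat_mod.comp (nat_div.comp (hn.comp fst) (nat_pow.comp (hk.comp fst) snd)) (hk.comp fst))

theorem seqOf {k q0 m : α → ℕ} {trans : α → List (List ℕ)} {out : α → List ℕ}
    (hk : Primrec k) (htrans : Primrec trans) (hq0 : Primrec q0) (hout : Primrec out)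
    (hm : Primrec m) : Primrec fun x => _root_.seqOf (k x) (trans x) (q0 x) (out x) (m x) :=
  (list_getD 0).comp hout (dfaoRun htrans hq0 (lowDigits hk hm hm))

theorem factorAt {s : α → ℕ → ℕ} {i L : α → ℕ} (hs : Primrec₂ s) (hi : Primrec i)
    (hL : Primrec L) : Primrec fun x => _root_.factorAt (s x) (i x) (L x) :=
  list_map (list_range.comp hL) (hs.comp fst (nat_add.comp (hi.comp fst) snd))

theorem factorBound {k q0 L : α → ℕ} {trans : α → List (List ℕ)} (hk : Primrec k)
    (htrans : Primrec trans) (hq0 : Primrec q0) (hL : Primrec L) :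
    Primrec fun x => _root_.factorBound (k x) (trans x) (q0 x) (L x) := by
  have hN : Primrec fun x => stateBound (trans x) (q0 x) :=
    nat_add.comp hq0 ((list_foldr (list_flatten.comp htrans) (const 0)
      (nat_add.comp (fst.comp snd) (snd.comp snd)).to₂).of_eq fun x => rfl)
  have hN1 := succ.comp hN
  exact nat_pow.comp hk (nat_add.comp (nat_pow.comp (nat_mul.comp hN1 hN1) hN1) hL)

end Primrec

open Primrec in
theorem primrecPred_mirrorCheck :
    PrimrecPred fun x : ℕ × List (List ℕ) × ℕ × List ℕ × ℕ =>
      MirrorCheck x.1 x.2.1 x.2.2.1 x.2.2.2.1 x.2.2.2.2 := by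
  have hs : Primrec₂ fun (x : ℕ × List (List ℕ) × ℕ × List ℕ × ℕ) m =>
      seqOf x.1 x.2.1 x.2.2.1 x.2.2.2.1 m :=
    Primrec.seqOf (fst.comp fst) (fst.comp (snd.comp fst)) (fst.comp (snd.comp (snd.comp fst)))
      (fst.comp (snd.comp (snd.comp (snd.comp fst)))) snd
  have hl : Primrec fun x : ℕ × List (List ℕ) × ℕ × List ℕ × ℕ => x.2.2.2.2 :=
    snd.comp (snd.comp (snd.comp snd))
  have hB : Primrec fun x : ℕ × List (List ℕ) × ℕ × List ℕ × ℕ =>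
      factorBound x.1 x.2.1 x.2.2.1 x.2.2.2.2 :=
    Primrec.factorBound fst (fst.comp snd) (fst.comp (snd.comp snd)) hl
  have hfactor {i : ℕ × ℕ × (ℕ × List (List ℕ) × ℕ × List ℕ × ℕ) → ℕ}
      (hi : Primrec i) :
      Primrec fun p : ℕ × ℕ × (ℕ × List (List ℕ) × ℕ × List ℕ × ℕ) =>
        factorAt (seqOf p.2.2.1 p.2.2.2.1 p.2.2.2.2.1 p.2.2.2.2.2.1) (i p) p.2.2.2.2.2.2 :=
    Primrec.factorAt (hs.comp (snd.comp (snd.comp fst)) snd) hi (hl.comp (snd.comp snd))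
  have hpair :
      PrimrecRel fun (j : ℕ) (y : ℕ × (ℕ × List (List ℕ) × ℕ × List ℕ × ℕ)) =>
      factorAt (seqOf y.2.1 y.2.2.1 y.2.2.2.1 y.2.2.2.2.1) j y.2.2.2.2.2 ≠
        (factorAt (seqOf y.2.1 y.2.2.1 y.2.2.2.1 y.2.2.2.2.1) y.1 y.2.2.2.2.2).reverse :=
    (Primrec.eq.comp (hfactor fst) (list_reverse.comp (hfactor (fst.comp snd)))).not
  have hinner : PrimrecRel fun (i : ℕ) (x : ℕ × List (List ℕ) × ℕ × List ℕ × ℕ) =>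
      ∀ j < factorBound x.1 x.2.1 x.2.2.1 x.2.2.2.2,
        factorAt (seqOf x.1 x.2.1 x.2.2.1 x.2.2.2.1) j x.2.2.2.2 ≠
          (factorAt (seqOf x.1 x.2.1 x.2.2.1 x.2.2.2.1) i x.2.2.2.2).reverse :=
    (hpair.forall_mem_list.comp (list_range.comp (hB.comp snd)) Primrec.id).of_eq
      fun _ => by simp only [List.mem_range, id]
  exact (hinner.forall_mem_list.comp (list_range.comp hB) Primrec.id).of_eq
    fun _ => by simp only [List.mem_range, id, MirrorCheck]

/-- It is decidable, given `k ≥ 2`, a DFAO generating a `k`-automatic sequence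
`a`, and a length `l ≥ 1`, whether `a` has the property that whenever `x` is a
factor of `a` of length `≥ l`, its reversal `x^R` is not a factor of `a`. -/
theorem mirrorInvarianceFailure_decidable :
    ∃ f : ℕ × List (List ℕ) × ℕ × List ℕ × ℕ → Bool,
      Computable f ∧
      ∀ (k : ℕ) (trans : List (List ℕ)) (q0 : ℕ) (out : List ℕ) (a : ℕ → ℕ)
        (l : ℕ),
        2 ≤ k → dfaoGenerates k trans q0 out a → 1 ≤ l →
        (f (k, trans, q0, out, l) = true ↔
          ∀ w : List ℕ, IsFactorOf a w → l ≤ w.length →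
            ¬ IsFactorOf a w.reverse) := by
  refine ⟨fun x => decide (MirrorCheck x.1 x.2.1 x.2.2.1 x.2.2.2.1 x.2.2.2.2),
    primrecPred_mirrorCheck.decide.to_comp, ?_⟩
  intro k trans q0 out a l hk hgen _
  rw [decide_eq_true_iff]
  exact mirrorCheck_iff hk hgen l
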